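/- Fix n ≥ 1, an initial sorted age vector v₀ : Fin n → ℝ (nonincreasing, nonnegative entries), a sequence of action types (c_k)_{k≥1} with each c_k either 'poll' or 'send', positive durations (z_k)_{k≥1}, and a rank sequence (j_k)_{k≥1} with j_k : Fin n. Define the age trajectory (v_k) of the rank sequence (j_k) recursively: v_k is the poll update of v_{k−1} with rank j_k and duration z_k if c_k = poll, and the send update of v_{k−1} with duration z_k if c_k = send. Let (u_k) be the trajectory of the constant rank sequence j_k = 0 (maximum-age-first) with the same initial vector u₀ = v₀, the same action types, and the same durations. Then for every k ≥ 0 and every i : Fin n, u_k i ≤ v_k i. -/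
import Mathlib


/-- The two kinds of actions the gateway can take: poll a sensor, or send to the monitor. -/
inductive GWAction
  | poll : GWAction
  | send : GWAction
deriving DecidableEq

/-- The poll update of an ordered age vector `v` with rank `j` and duration `z`. -/
def pollUpdate {n : ℕ} (v : Fin n → ℝ) (j : Fin n) (z : ℝ) : Fin n → ℝ := fun i =>
  if h : (i : ℕ) + 1 < n then
    (if (i : ℕ) < (j : ℕ) then v i + z else v ⟨(i : ℕ) + 1, h⟩ + z)
  else z

/-- The gateway age trajectory: starting from `v₀`, at step `k ≥ 1` apply the poll
update with rank `j k` and duration `z k` if `c k = poll`, and the send update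
(all ages increase by `z k`) if `c k = send`. -/
def traj {n : ℕ} (v₀ : Fin n → ℝ) (c : ℕ → GWAction) (z : ℕ → ℝ) (j : ℕ → Fin n) :
    ℕ → Fin n → ℝ
  | 0 => v₀
  | k + 1 =>
    match c (k + 1) with
    | GWAction.poll => pollUpdate (traj v₀ c z j k) (j (k + 1)) (z (k + 1))
    | GWAction.send => fun i => traj v₀ c z j k i + z (k + 1)

lemma pollUpdate_zero_antitone {n : ℕ} (hn : 1 ≤ n) (u : Fin n → ℝ)
    (hu : Antitone u) (hnn : ∀ i, 0 ≤ u i) (z : ℝ) (hz : 0 ≤ z) :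
    Antitone (pollUpdate u ⟨0, hn⟩ z) := by
  intro a b hab
  simp only [pollUpdate]
  by_cases hb : (b : ℕ) + 1 < n
  · have ha : (a : ℕ) + 1 < n := lt_of_le_of_lt (by exact_mod_cast Nat.add_le_add_right hab 1) hb
    rw [dif_pos ha, dif_pos hb]
    simp only [Nat.not_lt_zero, if_false]
    have : u ⟨(b : ℕ) + 1, hb⟩ ≤ u ⟨(a : ℕ) + 1, ha⟩ := by
      apply hu
      exact_mod_cast Nat.add_le_add_right hab 1
    linarith
  · rw [dif_neg hb]
    by_cases ha : (a : ℕ) + 1 < n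
    · rw [dif_pos ha]
      simp only [Nat.not_lt_zero, if_false]
      have := hnn ⟨(a : ℕ) + 1, ha⟩
      linarith
    · rw [dif_neg ha]

lemma pollUpdate_zero_nonneg {n : ℕ} (hn : 1 ≤ n) (u : Fin n → ℝ)
    (hnn : ∀ i, 0 ≤ u i) (z : ℝ) (hz : 0 ≤ z) :
    ∀ i, 0 ≤ pollUpdate u ⟨0, hn⟩ z i := by
  intro i
  simp only [pollUpdate]
  by_cases h : (i : ℕ) + 1 < n
  · rw [dif_pos h]
    simp only [Nat.not_lt_zero, if_false]
    have := hnn ⟨(i : ℕ) + 1, h⟩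
    linarith
  · rw [dif_neg h]; exact hz

lemma pollUpdate_zero_le {n : ℕ} (hn : 1 ≤ n) (u v : Fin n → ℝ)
    (hu : Antitone u) (hle : ∀ i, u i ≤ v i) (jj : Fin n) (z : ℝ) :
    ∀ i, pollUpdate u ⟨0, hn⟩ z i ≤ pollUpdate v jj z i := by
  intro i
  simp only [pollUpdate]
  by_cases h : (i : ℕ) + 1 < n
  · rw [dif_pos h, dif_pos h]
    simp only [Nat.not_lt_zero, if_false]
    by_cases hij : (i : ℕ) < (jj : ℕ)
    · rw [if_pos hij]
      have h1 : u ⟨(i : ℕ) + 1, h⟩ ≤ u i := by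
        apply hu; exact_mod_cast Nat.le_succ _
      have := hle i
      linarith
    · rw [if_neg hij]
      have := hle ⟨(i : ℕ) + 1, h⟩
      linarith
  · rw [dif_neg h, dif_neg h]

/-- Deterministic (coupled sample-path) content of Lemma 1: with a common initial sorted
age vector, common action types and common positive durations, the maximum-age-first
rank sequence (constant rank 0) yields pointwise smaller ordered gateway ages than any
rank sequence, at every step. -/
theorem maf_traj_dominates
    (n : ℕ) (hn : 1 ≤ n) (v₀ : Fin n → ℝ)
    (hv₀_sorted : Antitone v₀) (hv₀_nonneg : ∀ i, 0 ≤ v₀ i)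
    (c : ℕ → GWAction) (z : ℕ → ℝ) (hz : ∀ k, 1 ≤ k → 0 < z k)
    (j : ℕ → Fin n) :
    ∀ k : ℕ, ∀ i : Fin n,
      traj v₀ c z (fun _ => ⟨0, hn⟩) k i ≤ traj v₀ c z j k i := by
  suffices H : ∀ k : ℕ,
      Antitone (traj v₀ c z (fun _ => ⟨0, hn⟩) k) ∧
      (∀ i, 0 ≤ traj v₀ c z (fun _ => ⟨0, hn⟩) k i) ∧
      (∀ i, traj v₀ c z (fun _ => ⟨0, hn⟩) k i ≤ traj v₀ c z j k i) by
    intro k; exact (H k).2.2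
  intro k
  induction k with
  | zero => exact ⟨hv₀_sorted, hv₀_nonneg, fun i => le_refl _⟩
  | succ k ih =>
    obtain ⟨h1, h2, h3⟩ := ih
    have hzk : 0 < z (k + 1) := hz (k + 1) (Nat.le_add_left 1 k)
    show Antitone (traj v₀ c z (fun _ => ⟨0, hn⟩) (k+1)) ∧ _
    simp only [traj]
    cases c (k + 1) with
    | poll =>
      exact ⟨pollUpdate_zero_antitone hn _ h1 h2 _ hzk.le,
        pollUpdate_zero_nonneg hn _ h2 _ hzk.le,
        pollUpdate_zero_le hn _ _ h1 h3 _ _⟩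
    | send =>
      dsimp only
      refine ⟨fun a b hab => ?_, fun i => ?_, fun i => ?_⟩
      · simpa using add_le_add_right (h1 hab) (z (k + 1))
      · have := h2 i; show 0 ≤ _ + _; linarith
      · have := h3 i; show _ + _ ≤ _ + _; linarith
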